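/- arXiv:2505.02724 — 9 statements merged into one kernel-verified Lean document; each statement's English description precedes it below -/
import Mathlib

section
/- Let L be a join-semilattice, let S ∈ Ind(L), and let l ∈ L with l ∉ S. Then there exists P ∈ Ind(L) with S ⊆ P and l ∉ P which is maximal (with respect to inclusion) among ind-objects containing S and not containing l; any such P belongs to X_L, i.e., the intersection of all ind-objects strictly containing P strictly contains P (indeed l lies in that intersection). -/
/-- An ind-object of a join-semilattice `L`: a nonempty, downward closed subset of `L`
closed under joins of two elements. -/
def IsIndObject {L : Type*} [SemilatticeSup L] (S : Set L) : Prop :=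
  S.Nonempty ∧ (∀ ⦃l s : L⦄, l ≤ s → s ∈ S → l ∈ S) ∧ ∀ ⦃a b : L⦄, a ∈ S → b ∈ S → a ⊔ b ∈ S

/-- `Ind(L)`, the set of ind-objects of `L`, partially ordered by inclusion. -/
abbrev IndObj (L : Type*) [SemilatticeSup L] := {S : Set L // IsIndObject S}

/-- The intersection of all ind-objects strictly containing `P`. -/
def indInterAbove {L : Type*} [SemilatticeSup L] (P : IndObj L) : Set L :=
  ⋂ (Q : IndObj L) (_ : P.1 ⊂ Q.1), Q.1

/-! Ind-objects are closed under unions of nonempty chains, so Zorn's lemma yields an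
ind-object `P ⊇ S` maximal among those avoiding `l`. By maximality every ind-object strictly
above `P` contains `l`, hence so does their intersection, while `P` itself does not. -/

section

variable {L : Type*} [SemilatticeSup L]

theorem IsIndObject.sUnion_of_isChain {c : Set (Set L)} (hc : ∀ A ∈ c, IsIndObject A)
    (hchain : IsChain (· ⊆ ·) c) (hne : c.Nonempty) : IsIndObject (⋃₀ c) := by
  refine ⟨?_, ?_, ?_⟩
  · obtain ⟨A, hA⟩ := hne
    obtain ⟨x, hx⟩ := (hc A hA).1
    exact ⟨x, A, hA, hx⟩
  · rintro a s hle ⟨A, hA, hs⟩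
    exact ⟨A, hA, (hc A hA).2.1 hle hs⟩
  · rintro a b ⟨A, hA, ha⟩ ⟨B, hB, hb⟩
    rcases hchain.total hA hB with hAB | hBA
    · exact ⟨B, hB, (hc B hB).2.2 (hAB ha) hb⟩
    · exact ⟨A, hA, (hc A hA).2.2 ha (hBA hb)⟩

theorem IndObj.isIndObject_sUnion_val_of_isChain {c : Set (IndObj L)}
    (hchain : IsChain (· ≤ ·) c) (hne : c.Nonempty) : IsIndObject (⋃₀ (Subtype.val '' c)) :=
  IsIndObject.sUnion_of_isChain (by rintro _ ⟨Q, -, rfl⟩; exact Q.2)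
    (hchain.image_of_map_rel _ _ Subtype.val fun _ _ => id) (hne.image _)

theorem IndObj.exists_maximal_subset_not_mem {S : IndObj L} {l : L} (hl : l ∉ S.1) :
    ∃ P : IndObj L, Maximal (fun Q : IndObj L => S.1 ⊆ Q.1 ∧ l ∉ Q.1) P := by
  obtain ⟨P, -, hP⟩ := zorn_le_nonempty₀ {Q : IndObj L | S.1 ⊆ Q.1 ∧ l ∉ Q.1}
    (fun c hcs hchain Q hQ => by
      refine ⟨⟨_, isIndObject_sUnion_val_of_isChain hchain ⟨Q, hQ⟩⟩, ⟨?_, ?_⟩,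
        fun R hR => Set.subset_sUnion_of_mem ⟨R, hR, rfl⟩⟩
      · exact (hcs hQ).1.trans (Set.subset_sUnion_of_mem ⟨Q, hQ, rfl⟩)
      · rintro ⟨_, ⟨R, hR, rfl⟩, hlR⟩
        exact (hcs hR).2 hlR)
    S ⟨subset_rfl, hl⟩
  exact ⟨P, hP⟩

theorem IndObj.subset_indInterAbove (P : IndObj L) : P.1 ⊆ indInterAbove P :=
  fun _ hx => Set.mem_iInter₂.2 fun _ hQ => hQ.subset hx

theorem IndObj.mem_indInterAbove_of_maximal {S : Set L} {l : L} {P : IndObj L}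
    (hP : Maximal (fun Q : IndObj L => S ⊆ Q.1 ∧ l ∉ Q.1) P) : l ∈ indInterAbove P := by
  refine Set.mem_iInter₂.2 fun Q hPQ => ?_
  by_contra hlQ
  exact hPQ.ne (hPQ.subset.antisymm (hP.2 ⟨hP.1.1.trans hPQ.subset, hlQ⟩ hPQ.subset))

end

/-- Let `S ∈ Ind(L)` and `l ∈ L` with `l ∉ S`.  Then there exists `P ∈ Ind(L)` with
`S ⊆ P` and `l ∉ P` which is maximal among ind-objects containing `S` and not containing
`l`; any such `P` belongs to `X_L`, i.e. the intersection of all ind-objects strictly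
containing `P` strictly contains `P` (indeed `l` lies in that intersection). -/
theorem stmt_2 (L : Type*) [SemilatticeSup L] (S : IndObj L) (l : L) (hl : l ∉ S.1) :
    (∃ P : IndObj L, Maximal (fun Q : IndObj L => S.1 ⊆ Q.1 ∧ l ∉ Q.1) P) ∧
    (∀ P : IndObj L, Maximal (fun Q : IndObj L => S.1 ⊆ Q.1 ∧ l ∉ Q.1) P →
      l ∈ indInterAbove P ∧ P.1 ⊂ indInterAbove P) := by
  refine ⟨IndObj.exists_maximal_subset_not_mem hl, fun P hP => ?_⟩
  have hl_mem := IndObj.mem_indInterAbove_of_maximal hP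
  exact ⟨hl_mem, P.subset_indInterAbove, fun h => hP.1.2 (h hl_mem)⟩
end

section
/- Let L be a join-semilattice and let (Y, Supp_Y) be a support datum of L. Then the map Y → 2^L sending y to {l ∈ L | y ∉ Supp_Y(l)} is injective. Consequently, for any two support data X and Y of L, there is at most one map of support data from X to Y. -/
universe u

/-! Points of a T0 space are determined by which generating open sets contain them; for a support
datum these are the complements of the supports, so a point is determined by the set of `l` whose
support misses it. A map of support data fixes that set, hence is unique. -/

theorem TopologicalSpace.inseparable_generateFrom_of_forall_mem_iff {X : Type*}
    {g : Set (Set X)} {x y : X} (h : ∀ s ∈ g, x ∈ s ↔ y ∈ s) :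
    @Inseparable X (generateFrom g) x y := by
  let _ := generateFrom g
  have hsame : {s | x ∈ s ∧ s ∈ g} = {s | y ∈ s ∧ s ∈ g} := by
    ext s
    exact and_congr_left (h s)
  change nhds x = nhds y
  rw [nhds_generateFrom, nhds_generateFrom, hsame]

theorem injective_setOf_notMem_of_eq_generateFrom {L Y : Type*} [tY : TopologicalSpace Y]
    [T0Space Y] (sY : L → Set Y)
    (htopY : tY = TopologicalSpace.generateFrom {U : Set Y | ∃ l : L, U = (sY l)ᶜ}) :
    Function.Injective (fun y : Y => {l : L | y ∉ sY l}) := by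
  intro y₁ y₂ h
  refine Inseparable.eq ?_
  rw [htopY]
  refine TopologicalSpace.inseparable_generateFrom_of_forall_mem_iff ?_
  rintro _ ⟨l, rfl⟩
  exact Set.ext_iff.mp h l

theorem stmt_6_general (L : Type*) [SemilatticeSup L] (Y : Type*) [tY : TopologicalSpace Y]
    [T0Space Y] (sY : L → Set Y)
    (htopY : tY = TopologicalSpace.generateFrom {U : Set Y | ∃ l : L, U = (sY l)ᶜ}) :
    Function.Injective (fun y : Y => {l : L | y ∉ sY l}) ∧
    ∀ (X : Type u) (tX : TopologicalSpace X), @T0Space X tX →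
      ∀ sX : L → Set X,
        (∀ l l' : L, sX (l ⊔ l') = sX l ∪ sX l') →
        Function.Injective (fun S : IndObj L => ⋃ l ∈ S.1, sX l) →
        tX = TopologicalSpace.generateFrom {U : Set X | ∃ l : L, U = (sX l)ᶜ} →
        ∀ f g : X → Y, @Continuous X Y tX tY f → @Continuous X Y tX tY g →
          (∀ l : L, f ⁻¹' sY l = sX l) → (∀ l : L, g ⁻¹' sY l = sX l) → f = g := by
  have hinj := injective_setOf_notMem_of_eq_generateFrom sY htopY
  refine ⟨hinj, fun X tX _ sX _ _ _ f g _ _ hf hg => funext fun x => hinj ?_⟩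
  ext l
  simp only [Set.mem_ofPred_eq, ← Set.mem_preimage, hf, hg]

/-- Let `(Y, Supp_Y)` be a support datum of `L`.  Then `y ↦ {l ∈ L | y ∉ Supp_Y l}` is
injective.  Consequently, for any two support data `X` and `Y` of `L` there is at most
one map of support data from `X` to `Y`. -/
theorem stmt_6 (L : Type*) [SemilatticeSup L] (Y : Type*) [tY : TopologicalSpace Y]
    [T0Space Y] (sY : L → Set Y)
    (hjoinY : ∀ l l' : L, sY (l ⊔ l') = sY l ∪ sY l')
    (hinjY : Function.Injective (fun S : IndObj L => ⋃ l ∈ S.1, sY l))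
    (htopY : tY = TopologicalSpace.generateFrom {U : Set Y | ∃ l : L, U = (sY l)ᶜ}) :
    Function.Injective (fun y : Y => {l : L | y ∉ sY l}) ∧
    ∀ (X : Type u) (tX : TopologicalSpace X), @T0Space X tX →
      ∀ sX : L → Set X,
        (∀ l l' : L, sX (l ⊔ l') = sX l ∪ sX l') →
        Function.Injective (fun S : IndObj L => ⋃ l ∈ S.1, sX l) →
        tX = TopologicalSpace.generateFrom {U : Set X | ∃ l : L, U = (sX l)ᶜ} →
        ∀ f g : X → Y, @Continuous X Y tX tY f → @Continuous X Y tX tY g →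
          (∀ l : L, f ⁻¹' sY l = sX l) → (∀ l : L, g ⁻¹' sY l = sX l) → f = g :=
  stmt_6_general L Y (tY := tY) sY htopY
end

section
/- Let T be a pretriangulated category and S a set of thick subcategories of T closed under unions of chains. Let I ∈ S and let a be an object of T with a ∉ I. Then there exists an S-prime P ∈ S with I ⊆ P and a ∉ P. -/
open CategoryTheory CategoryTheory.Limits CategoryTheory.Pretriangulated

universe v u

/-- A thick subcategory of a pretriangulated category, viewed as a class of objects:
it contains the zero objects and is closed under isomorphisms, shifts in both
directions, extensions, and retracts. -/
structure IsThickSubcat {C : Type u} [Category.{v} C] [Preadditive C] [HasZeroObject C]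
    [HasShift C ℤ] [∀ n : ℤ, (shiftFunctor C n).Additive] [Pretriangulated C]
    (P : Set C) : Prop where
  zero_mem : ∀ X : C, IsZero X → X ∈ P
  iso_mem : ∀ {X Y : C}, (X ≅ Y) → X ∈ P → Y ∈ P
  shift_mem : ∀ (X : C) (n : ℤ), X ∈ P → X⟦n⟧ ∈ P
  ext_mem : ∀ T ∈ distTriang C, T.obj₁ ∈ P → T.obj₃ ∈ P → T.obj₂ ∈ P
  retract_mem : ∀ (X Y : C), X ∈ P → ∀ (i : Y ⟶ X) (r : X ⟶ Y), i ≫ r = 𝟙 Y → Y ∈ P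

/-!
By Zorn's lemma, `I` lies in a member `P` of `S` maximal among those not containing `a`.
Every member of `S` strictly containing `P` must then contain `a`, so `a` lies in their
intersection but not in `P`.
-/

section

variable {α : Type*} {S : Set (Set α)} {a : α}

theorem exists_le_maximal_not_mem
    (hchain : ∀ 𝒞 ⊆ S, 𝒞.Nonempty → IsChain (· ⊆ ·) 𝒞 → ⋃₀ 𝒞 ∈ S)
    {I : Set α} (hI : I ∈ S) (ha : a ∉ I) :
    ∃ P, I ⊆ P ∧ Maximal (fun P => P ∈ S ∧ a ∉ P) P :=
  zorn_subset_nonempty {P | P ∈ S ∧ a ∉ P}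
    (fun 𝒞 h𝒞 h𝒞chain h𝒞ne =>
      ⟨⋃₀ 𝒞,
        ⟨hchain 𝒞 (fun _ hP => (h𝒞 hP).1) h𝒞ne h𝒞chain,
          fun ⟨_, hP, haP⟩ => (h𝒞 hP).2 haP⟩,
        fun _ => Set.subset_sUnion_of_mem⟩)
    I ⟨hI, ha⟩

theorem Maximal.mem_sInter_ssupersets {P : Set α}
    (hP : Maximal (fun P => P ∈ S ∧ a ∉ P) P) :
    a ∈ ⋂₀ {Q | Q ∈ S ∧ P ⊂ Q} := by
  rintro Q ⟨hQS, hPQ⟩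
  by_contra haQ
  exact hPQ.2 (hP.le_of_ge ⟨hQS, haQ⟩ hPQ.1)

theorem Maximal.ssubset_sInter_ssupersets {P : Set α}
    (hP : Maximal (fun P => P ∈ S ∧ a ∉ P) P) :
    P ⊂ ⋂₀ {Q | Q ∈ S ∧ P ⊂ Q} :=
  Set.ssubset_iff_of_subset (fun _ hx _ hQ => hQ.2.1 hx) |>.2
    ⟨a, hP.mem_sInter_ssupersets, hP.prop.2⟩

end

/-- Let `S` be a set of thick subcategories of `T` closed under unions of chains, let
`I ∈ S` and let `a ∉ I`.  Then there exists an `S`-prime `P ∈ S` (the intersection of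
all members of `S` strictly containing `P` strictly contains `P`) with `I ⊆ P` and
`a ∉ P`. -/
theorem stmt_8 (C : Type u) [Category.{v} C] [Preadditive C] [HasZeroObject C]
    [HasShift C ℤ] [∀ n : ℤ, (shiftFunctor C n).Additive] [Pretriangulated C]
    (S : Set (Set C)) (hthick : ∀ I ∈ S, IsThickSubcat I)
    (hchain : ∀ 𝒞 ⊆ S, 𝒞.Nonempty → IsChain (· ⊆ ·) 𝒞 → ⋃₀ 𝒞 ∈ S)
    (I : Set C) (hI : I ∈ S) (a : C) (ha : a ∉ I) :
    ∃ P : Set C, P ∈ S ∧ I ⊆ P ∧ a ∉ P ∧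
      P ⊂ ⋂₀ {Q : Set C | Q ∈ S ∧ P ⊂ Q} := by
  obtain ⟨P, hIP, hP⟩ := exists_le_maximal_not_mem hchain hI ha
  exact ⟨P, hP.prop.1, hIP, hP.prop.2, hP.ssubset_sInter_ssupersets⟩
end

section
/- Let T be a pretriangulated category and S a set of thick subcategories of T closed under unions of chains. The map S → 2^{Spc(T,S)} sending I ∈ S to Supp(I) := {P ∈ Spc(T,S) | I ⊄ P} is injective. If moreover S is closed under arbitrary intersections, then the map sending a subset Z ⊆ Spc(T,S) to {a ∈ T | Supp(a) ⊆ Z} is a left inverse: for every I ∈ S, I = {a ∈ T | Supp(a) ⊆ Supp(I)}. -/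
/-!
By Zorn's lemma (unions of chains stay in `S`), for `I ∈ S` and `a ∉ I` there is a member `P ⊇ I`
of `S` maximal among those avoiding `a`; every member of `S` strictly above `P` contains `a`, so
`P` is an `S`-prime in `Supp(a)` but not in `Supp(I)`. Hence `Supp(I) ⊆ Supp(J)` forces `I ⊆ J`
for `J ∈ S`, which gives both injectivity and `I = {a | Supp(a) ⊆ Supp(I)}`.
-/

open CategoryTheory CategoryTheory.Limits CategoryTheory.Pretriangulated

universe v u

variable {C : Type u} [Category.{v} C]

/-- `Spc(T,S)`: the set of `S`-primes, i.e. members `P` of `S` such that the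
intersection of all members of `S` strictly containing `P` strictly contains `P`. -/
def SpcSet (S : Set (Set C)) : Set (Set C) :=
  {P : Set C | P ∈ S ∧ P ⊂ ⋂₀ {Q : Set C | Q ∈ S ∧ P ⊂ Q}}

section

variable {α : Type*}

/-- `a` lies in the intersection of the members of `S` strictly above `P`, but not in `P`. -/
lemma mem_spcSet_of_forall_ssuperset_mem {S : Set (Set α)} {P : Set α} {a : α}
    (hP : P ∈ S) (haP : a ∉ P) (hmax : ∀ Q ∈ S, P ⊂ Q → a ∈ Q) : P ∈ SpcSet S := by
  refine ⟨hP, Set.subset_sInter fun Q hQ => hQ.2.1, fun hsub => haP (hsub ?_)⟩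
  exact Set.mem_sInter.2 fun Q ⟨hQS, hPQ⟩ => hmax Q hQS hPQ

lemma exists_spcSet_superset_not_mem {S : Set (Set α)}
    (hchain : ∀ 𝒞 ⊆ S, 𝒞.Nonempty → IsChain (· ⊆ ·) 𝒞 → ⋃₀ 𝒞 ∈ S)
    {I : Set α} (hI : I ∈ S) {a : α} (ha : a ∉ I) :
    ∃ P ∈ SpcSet S, I ⊆ P ∧ a ∉ P := by
  let T : Set (Set α) := {J | J ∈ S ∧ I ⊆ J ∧ a ∉ J}
  have chain_bdd : ∀ 𝒞 ⊆ T, IsChain (· ⊆ ·) 𝒞 → 𝒞.Nonempty → ∃ ub ∈ T, ∀ J ∈ 𝒞, J ⊆ ub := by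
    rintro 𝒞 h𝒞T h𝒞 ⟨J, hJ⟩
    refine ⟨⋃₀ 𝒞, ⟨hchain 𝒞 (fun K hK => (h𝒞T hK).1) ⟨J, hJ⟩ h𝒞, ?_, ?_⟩,
      fun K hK => Set.subset_sUnion_of_mem hK⟩
    · exact (h𝒞T hJ).2.1.trans (Set.subset_sUnion_of_mem hJ)
    · rintro ⟨K, hK, haK⟩
      exact (h𝒞T hK).2.2 haK
  obtain ⟨P, hIP, hPmax⟩ := zorn_subset_nonempty T chain_bdd I ⟨hI, subset_rfl, ha⟩
  obtain ⟨hPS, -, haP⟩ := hPmax.1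
  refine ⟨P, mem_spcSet_of_forall_ssuperset_mem hPS haP fun Q hQS hPQ => ?_, hIP, haP⟩
  by_contra haQ
  exact hPQ.2 (hPmax.2 ⟨hQS, hIP.trans hPQ.1, haQ⟩ hPQ.1)

/-- The support `Supp(I)` of the paper. -/
def spcSupp (S : Set (Set α)) (I : Set α) : Set (Set α) :=
  {P | P ∈ SpcSet S ∧ ¬ I ⊆ P}

lemma spcSupp_mono (S : Set (Set α)) {I J : Set α} (hIJ : I ⊆ J) :
    spcSupp S I ⊆ spcSupp S J :=
  fun _ ⟨hP, hIP⟩ => ⟨hP, fun hJP => hIP (hIJ.trans hJP)⟩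

lemma spcSupp_subset_spcSupp_iff {S : Set (Set α)}
    (hchain : ∀ 𝒞 ⊆ S, 𝒞.Nonempty → IsChain (· ⊆ ·) 𝒞 → ⋃₀ 𝒞 ∈ S)
    (I : Set α) {J : Set α} (hJ : J ∈ S) : spcSupp S I ⊆ spcSupp S J ↔ I ⊆ J := by
  refine ⟨fun hsub a haI => ?_, spcSupp_mono S⟩
  by_contra haJ
  obtain ⟨P, hP, hJP, haP⟩ := exists_spcSet_superset_not_mem hchain hJ haJ
  exact (hsub ⟨hP, fun hIP => haP (hIP haI)⟩).2 hJP

lemma mem_iff_spcSupp_singleton_subset {S : Set (Set α)}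
    (hchain : ∀ 𝒞 ⊆ S, 𝒞.Nonempty → IsChain (· ⊆ ·) 𝒞 → ⋃₀ 𝒞 ∈ S)
    {I : Set α} (hI : I ∈ S) (a : α) : a ∈ I ↔ spcSupp S {a} ⊆ spcSupp S I := by
  rw [spcSupp_subset_spcSupp_iff hchain _ hI, Set.singleton_subset_iff]

end

/-- The map `S → 2^{Spc(T,S)}`, `I ↦ Supp(I) = {P ∈ Spc(T,S) | I ⊄ P}`, is injective
on `S`; if `S` is moreover closed under arbitrary intersections, then
`Z ↦ {a | Supp(a) ⊆ Z}` is a left inverse: `I = {a | Supp(a) ⊆ Supp(I)}` for `I ∈ S`. -/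
theorem stmt_9 (C : Type u) [Category.{v} C] [Preadditive C] [HasZeroObject C]
    [HasShift C ℤ] [∀ n : ℤ, (shiftFunctor C n).Additive] [Pretriangulated C]
    (S : Set (Set C)) (hthick : ∀ I ∈ S, IsThickSubcat I)
    (hchain : ∀ 𝒞 ⊆ S, 𝒞.Nonempty → IsChain (· ⊆ ·) 𝒞 → ⋃₀ 𝒞 ∈ S) :
    Set.InjOn (fun I : Set C => {P : Set C | P ∈ SpcSet S ∧ ¬ I ⊆ P}) S ∧
    ((∀ 𝒞 ⊆ S, 𝒞.Nonempty → ⋂₀ 𝒞 ∈ S) →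
      ∀ I ∈ S, I = {a : C |
        {P : Set C | P ∈ SpcSet S ∧ a ∉ P} ⊆ {P : Set C | P ∈ SpcSet S ∧ ¬ I ⊆ P}}) := by
  refine ⟨fun I hI J hJ hIJ => ?_, fun _ I hI => ?_⟩
  · exact ((spcSupp_subset_spcSupp_iff hchain I hJ).1 hIJ.le).antisymm
      ((spcSupp_subset_spcSupp_iff hchain J hI).1 hIJ.ge)
  · ext a
    simpa only [spcSupp, Set.singleton_subset_iff, Set.mem_ofPred_eq] using
      mem_iff_spcSupp_singleton_subset hchain hI a
end

section
/- Let T be a pretriangulated category and S a set of thick subcategories of T closed under unions of chains. Then every member I ∈ S is the intersection of all S-primes containing it: I = ⋂ {P ∈ Spc(T,S) | I ⊆ P}. -/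
/-!
By Zorn's lemma, for `X ∉ I` there is a member `P ⊇ I` of `S` maximal among those not
containing `X`. Every member of `S` strictly containing `P` then contains `X`, so `X` lies in
the intersection of those members but not in `P`: the prime `P` separates `X` from `I`.
-/

open CategoryTheory CategoryTheory.Limits CategoryTheory.Pretriangulated

universe v u

variable {C : Type u} [Category.{v} C]

section ChainClosed

variable {α : Type*} {S : Set (Set α)}

theorem exists_maximal_not_mem_of_chain_closed
    (hchain : ∀ 𝒞 ⊆ S, 𝒞.Nonempty → IsChain (· ⊆ ·) 𝒞 → ⋃₀ 𝒞 ∈ S)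
    {I : Set α} (hI : I ∈ S) {x : α} (hx : x ∉ I) :
    ∃ P, I ⊆ P ∧ Maximal (· ∈ {J | J ∈ S ∧ x ∉ J}) P := by
  refine zorn_subset_nonempty {J | J ∈ S ∧ x ∉ J} (fun 𝒞 h𝒞 hc hne => ⟨⋃₀ 𝒞, ⟨?_, ?_⟩,
    fun _ => Set.subset_sUnion_of_mem⟩) I ⟨hI, hx⟩
  · exact hchain 𝒞 (fun J hJ => (h𝒞 hJ).1) hne hc
  · rintro ⟨J, hJ, hxJ⟩
    exact (h𝒞 hJ).2 hxJ

theorem mem_of_maximal_not_mem_of_ssubset {x : α} {P Q : Set α}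
    (hP : Maximal (· ∈ {J | J ∈ S ∧ x ∉ J}) P) (hQ : Q ∈ S) (hPQ : P ⊂ Q) : x ∈ Q := by
  by_contra hxQ
  exact hPQ.2 (hP.2 ⟨hQ, hxQ⟩ hPQ.1)

theorem ssubset_sInter_of_maximal_not_mem {x : α} {P : Set α}
    (hP : Maximal (· ∈ {J | J ∈ S ∧ x ∉ J}) P) :
    P ⊂ ⋂₀ {Q | Q ∈ S ∧ P ⊂ Q} := by
  have hsub : P ⊆ ⋂₀ {Q | Q ∈ S ∧ P ⊂ Q} := fun _ hy => Set.mem_sInter.2 fun _ hQ => hQ.2.1 hy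
  have hx : x ∈ ⋂₀ {Q | Q ∈ S ∧ P ⊂ Q} :=
    Set.mem_sInter.2 fun _ hQ => mem_of_maximal_not_mem_of_ssubset hP hQ.1 hQ.2
  exact hsub.ssubset_of_ne fun h => hP.prop.2 (h ▸ hx)

theorem mem_spcSet_of_maximal_not_mem {x : α} {P : Set α}
    (hP : Maximal (· ∈ {J | J ∈ S ∧ x ∉ J}) P) : P ∈ SpcSet S :=
  ⟨hP.prop.1, ssubset_sInter_of_maximal_not_mem hP⟩

end ChainClosed

/-- Every member `I ∈ S` is the intersection of all `S`-primes containing it. -/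
theorem stmt_10 (C : Type u) [Category.{v} C] [Preadditive C] [HasZeroObject C]
    [HasShift C ℤ] [∀ n : ℤ, (shiftFunctor C n).Additive] [Pretriangulated C]
    (S : Set (Set C)) (hthick : ∀ I ∈ S, IsThickSubcat I)
    (hchain : ∀ 𝒞 ⊆ S, 𝒞.Nonempty → IsChain (· ⊆ ·) 𝒞 → ⋃₀ 𝒞 ∈ S)
    (I : Set C) (hI : I ∈ S) :
    I = ⋂₀ {P : Set C | P ∈ SpcSet S ∧ I ⊆ P} := by
  refine Set.Subset.antisymm (fun X hX => Set.mem_sInter.2 fun P hP => hP.2 hX) fun X hX => ?_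
  by_contra hXI
  obtain ⟨P, hIP, hP⟩ := exists_maximal_not_mem_of_chain_closed hchain hI hXI
  exact hP.prop.2 (Set.mem_sInter.1 hX P ⟨mem_spcSet_of_maximal_not_mem hP, hIP⟩)
end

section
/- Let T be a pretriangulated category. The Matsui spectrum Spc_△(T) (the set of prime thick subcategories of T) is empty if and only if every object of T is a zero object. Equivalently, if T has a nonzero object, then there exists a prime thick subcategory of T. -/
open CategoryTheory CategoryTheory.Limits CategoryTheory.Pretriangulated

universe v u

/-- A prime thick subcategory: a thick subcategory `P` such that the intersection of
all thick subcategories strictly containing `P` strictly contains `P`. -/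
def IsPrimeThick {C : Type u} [Category.{v} C] [Preadditive C] [HasZeroObject C]
    [HasShift C ℤ] [∀ n : ℤ, (shiftFunctor C n).Additive] [Pretriangulated C]
    (P : Set C) : Prop :=
  IsThickSubcat P ∧ P ⊂ ⋂₀ {Q : Set C | IsThickSubcat Q ∧ P ⊂ Q}

section ThickSubcat

variable {C : Type u} [Category.{v} C] [Preadditive C] [HasZeroObject C]
    [HasShift C ℤ] [∀ n : ℤ, (shiftFunctor C n).Additive] [Pretriangulated C]

lemma isThickSubcat_setOf_isZero : IsThickSubcat {X : C | IsZero X} where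
  zero_mem _ h := h
  iso_mem e h := h.of_iso e.symm
  shift_mem X n h := (shiftFunctor C n).map_isZero h
  ext_mem T hT h₁ h₃ := Triangle.isZero₂_of_isZero₁₃ T hT h₁ h₃
  retract_mem X Y hX i r hir := by
    show IsZero Y
    rw [IsZero.iff_id_eq_zero, ← hir, hX.eq_of_tgt i 0, zero_comp]

lemma isThickSubcat_sUnion_of_isChain {c : Set (Set C)} (hc : IsChain (· ⊆ ·) c)
    (hne : c.Nonempty) (hthick : ∀ Q ∈ c, IsThickSubcat Q) : IsThickSubcat (⋃₀ c) where
  zero_mem X h := by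
    obtain ⟨Q, hQ⟩ := hne
    exact ⟨Q, hQ, (hthick Q hQ).zero_mem X h⟩
  iso_mem e h := by
    obtain ⟨Q, hQ, hX⟩ := h
    exact ⟨Q, hQ, (hthick Q hQ).iso_mem e hX⟩
  shift_mem X n h := by
    obtain ⟨Q, hQ, hX⟩ := h
    exact ⟨Q, hQ, (hthick Q hQ).shift_mem X n hX⟩
  ext_mem T hT h₁ h₃ := by
    obtain ⟨Q₁, hQ₁, hX₁⟩ := h₁
    obtain ⟨Q₃, hQ₃, hX₃⟩ := h₃
    rcases hc.total hQ₁ hQ₃ with h | h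
    · exact ⟨Q₃, hQ₃, (hthick Q₃ hQ₃).ext_mem T hT (h hX₁) hX₃⟩
    · exact ⟨Q₁, hQ₁, (hthick Q₁ hQ₁).ext_mem T hT hX₁ (h hX₃)⟩
  retract_mem X Y h i r hir := by
    obtain ⟨Q, hQ, hX⟩ := h
    exact ⟨Q, hQ, (hthick Q hQ).retract_mem X Y hX i r hir⟩

lemma exists_maximal_isThickSubcat_notMem {X : C} (hX : ¬ IsZero X) :
    ∃ P, Maximal (fun Q : Set C => IsThickSubcat Q ∧ X ∉ Q) P := by
  obtain ⟨P, -, hP⟩ := zorn_subset_nonempty {Q : Set C | IsThickSubcat Q ∧ X ∉ Q}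
    (fun c hcS hc hne => ⟨⋃₀ c,
      ⟨isThickSubcat_sUnion_of_isChain hc hne (fun Q hQ => (hcS hQ).1),
        fun ⟨Q, hQ, hXQ⟩ => (hcS hQ).2 hXQ⟩,
      fun _ => Set.subset_sUnion_of_mem⟩)
    {Y : C | IsZero Y} ⟨isThickSubcat_setOf_isZero, hX⟩
  exact ⟨P, hP⟩

/-- By maximality every thick subcategory strictly containing `P` contains `X`, so `X`
lies in their intersection but not in `P`. -/
lemma isPrimeThick_of_maximal {X : C} {P : Set C}
    (hP : Maximal (fun Q : Set C => IsThickSubcat Q ∧ X ∉ Q) P) : IsPrimeThick P := by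
  have hX : X ∈ ⋂₀ {Q : Set C | IsThickSubcat Q ∧ P ⊂ Q} := fun Q ⟨hQ, hPQ⟩ => by
    by_contra hXQ
    exact hPQ.not_subset (hP.le_of_ge ⟨hQ, hXQ⟩ hPQ.subset)
  exact ⟨hP.prop.1, fun Y hY Q hQ => hQ.2.subset hY, fun hsub => hP.prop.2 (hsub hX)⟩

lemma exists_isPrimeThick {X : C} (hX : ¬ IsZero X) : ∃ P : Set C, IsPrimeThick P :=
  (exists_maximal_isThickSubcat_notMem hX).imp fun _ => isPrimeThick_of_maximal

lemma IsPrimeThick.ne_univ {P : Set C} (hP : IsPrimeThick P) : P ≠ Set.univ := by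
  rintro rfl
  exact hP.2.not_subset (Set.subset_univ _)

end ThickSubcat

/-- The Matsui spectrum `Spc_△(T)` (the set of prime thick subcategories) is empty if
and only if every object of `T` is a zero object; equivalently, if `T` has a nonzero
object then there exists a prime thick subcategory of `T`. -/
theorem stmt_11 (C : Type u) [Category.{v} C] [Preadditive C] [HasZeroObject C]
    [HasShift C ℤ] [∀ n : ℤ, (shiftFunctor C n).Additive] [Pretriangulated C] :
    ({P : Set C | IsPrimeThick P} = ∅ ↔ ∀ X : C, IsZero X) ∧
    ((∃ X : C, ¬ IsZero X) → ∃ P : Set C, IsPrimeThick P) := by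
  refine ⟨⟨fun h X => ?_, fun h => ?_⟩, fun ⟨X, hX⟩ => exists_isPrimeThick hX⟩
  · by_contra hX
    obtain ⟨P, hP⟩ := exists_isPrimeThick hX
    exact Set.eq_empty_iff_forall_notMem.mp h P hP
  · refine Set.eq_empty_iff_forall_notMem.mpr fun P hP => hP.ne_univ ?_
    exact Set.eq_univ_of_forall fun X => hP.1.zero_mem X (h X)
end

section
/- Let T be a pretriangulated category. Then the Matsui spectrum Spc_△(T), equipped with the map a ↦ Supp(a) = {P ∈ Spc_△(T) | a ∉ P} and the topology whose closed sets are generated by {Supp(a) | a an object of T}, is a support datum of T, and it is universal: for every support datum (Y, Supp_Y) of T there exists a unique continuous map f: Spc_△(T) → Y with f^{-1}(Supp_Y(a)) = Supp(a) for every object a of T. -/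
open CategoryTheory CategoryTheory.Limits CategoryTheory.Pretriangulated

universe w v u

variable {C : Type u} [Category.{v} C] [Preadditive C] [HasZeroObject C]
  [HasShift C ℤ] [∀ n : ℤ, (shiftFunctor C n).Additive] [Pretriangulated C]

/-- The Matsui spectrum `Spc_△(T)` as a type: prime thick subcategories, i.e. thick
subcategories `P` such that the intersection of all thick subcategories strictly
containing `P` strictly contains `P`. -/
abbrev MatsuiSpc (C : Type u) [Category.{v} C] [Preadditive C] [HasZeroObject C]
    [HasShift C ℤ] [∀ n : ℤ, (shiftFunctor C n).Additive] [Pretriangulated C] :=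
  {P : Set C // IsThickSubcat P ∧ P ⊂ ⋂₀ {Q : Set C | IsThickSubcat Q ∧ P ⊂ Q}}

/-- `Supp(a) = {P ∈ Spc_△(T) | a ∉ P}`. -/
def matsuiSupp (a : C) : Set (MatsuiSpc C) := {P : MatsuiSpc C | a ∉ P.1}

/-- The topology on `Spc_△(T)` whose closed sets are generated by the `Supp(a)`. -/
instance MatsuiSpc.topologicalSpace : TopologicalSpace (MatsuiSpc C) :=
  .generateFrom {U : Set (MatsuiSpc C) | ∃ a : C, U = (matsuiSupp a)ᶜ}

/-!
A thick subcategory maximal among those avoiding a given object is prime, so by Zorn every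
thick subcategory is the intersection of the primes containing it; hence `I ↦ ⋃_{a ∈ I} Supp a`
is injective. Conversely, given a support datum `(Y, Supp_Y)` and a prime `P` with
`P⁺ := ⋂ {Q thick | P ⊊ Q}`, axiom (4) provides a point `y ∈ ⋃_{b ∈ P⁺} Supp_Y b` lying in no
`Supp_Y a` with `a ∈ P`. The objects whose support avoids `y` form a thick subcategory containing
`P` but not `P⁺`, so it is `P` itself: `y` has exactly the support of `P`. This defines the map
`Spc_△(T) → Y`, and `Y` being `T₀` for the topology generated by the supports makes it unique.
-/

open ZeroObject

namespace IsThickSubcat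

variable {P : Set C}

lemma sInter {S : Set (Set C)} (h : ∀ Q ∈ S, IsThickSubcat Q) : IsThickSubcat (⋂₀ S) where
  zero_mem X hX Q hQ := (h Q hQ).zero_mem X hX
  iso_mem e hX Q hQ := (h Q hQ).iso_mem e (hX Q hQ)
  shift_mem X n hX Q hQ := (h Q hQ).shift_mem X n (hX Q hQ)
  ext_mem T hT h₁ h₃ Q hQ := (h Q hQ).ext_mem T hT (h₁ Q hQ) (h₃ Q hQ)
  retract_mem X Z hX i r hir Q hQ := (h Q hQ).retract_mem X Z (hX Q hQ) i r hir

lemma sUnion_of_isChain {S : Set (Set C)} (hS : IsChain (· ⊆ ·) S) (hne : S.Nonempty)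
    (h : ∀ Q ∈ S, IsThickSubcat Q) : IsThickSubcat (⋃₀ S) where
  zero_mem X hX := let ⟨Q, hQ⟩ := hne; ⟨Q, hQ, (h Q hQ).zero_mem X hX⟩
  iso_mem e := fun ⟨Q, hQ, hX⟩ => ⟨Q, hQ, (h Q hQ).iso_mem e hX⟩
  shift_mem X n := fun ⟨Q, hQ, hX⟩ => ⟨Q, hQ, (h Q hQ).shift_mem X n hX⟩
  ext_mem T hT := fun ⟨Q, hQ, h₁⟩ ⟨R, hR, h₃⟩ => by
    rcases hS.total hQ hR with hQR | hRQ
    · exact ⟨R, hR, (h R hR).ext_mem T hT (hQR h₁) h₃⟩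
    · exact ⟨Q, hQ, (h Q hQ).ext_mem T hT h₁ (hRQ h₃)⟩
  retract_mem X Z := fun ⟨Q, hQ, hX⟩ i r hir => ⟨Q, hQ, (h Q hQ).retract_mem X Z hX i r hir⟩

lemma shift_one_mem_iff (hP : IsThickSubcat P) (a : C) : a⟦(1 : ℤ)⟧ ∈ P ↔ a ∈ P :=
  ⟨fun h => hP.iso_mem ((shiftFunctorCompIsoId C (1 : ℤ) (-1) (by norm_num)).app a)
      (hP.shift_mem _ (-1) h),
    hP.shift_mem a 1⟩

lemma biprod_mem_iff (hP : IsThickSubcat P) (a b : C) : (a ⊞ b) ∈ P ↔ a ∈ P ∧ b ∈ P :=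
  ⟨fun h => ⟨hP.retract_mem _ _ h biprod.inl biprod.fst biprod.inl_fst,
      hP.retract_mem _ _ h biprod.inr biprod.snd biprod.inr_snd⟩,
    fun ⟨ha, hb⟩ => hP.ext_mem _ (binaryBiproductTriangle_distinguished a b) ha hb⟩

end IsThickSubcat

/-- A thick subcategory maximal among those not containing `a` is prime: every strictly larger
thick subcategory contains `a`, hence so does their intersection. -/
lemma exists_matsuiSpc_of_notMem {I : Set C} (hI : IsThickSubcat I) {a : C} (ha : a ∉ I) :
    ∃ P : MatsuiSpc C, I ⊆ P.1 ∧ a ∉ P.1 := by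
  obtain ⟨P, hIP, ⟨hP, haP⟩, hPmax⟩ := zorn_subset_nonempty {Q : Set C | IsThickSubcat Q ∧ a ∉ Q}
    (fun S hS hchain hne => ⟨⋃₀ S,
      ⟨IsThickSubcat.sUnion_of_isChain hchain hne fun Q hQ => (hS hQ).1,
        fun ⟨Q, hQ, haQ⟩ => (hS hQ).2 haQ⟩,
      fun _ => Set.subset_sUnion_of_mem⟩) I ⟨hI, ha⟩
  have ha_mem : a ∈ ⋂₀ {Q : Set C | IsThickSubcat Q ∧ P ⊂ Q} := fun Q ⟨hQ, hPQ⟩ => by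
    by_contra haQ
    exact hPQ.not_subset (hPmax ⟨hQ, haQ⟩ hPQ.subset)
  exact ⟨⟨P, hP, Set.ssubset_iff_of_subset (fun x hx Q hQ => hQ.2.subset hx) |>.2 ⟨a, ha_mem, haP⟩⟩,
    hIP, haP⟩

lemma matsuiSupp_shift_one (a : C) : matsuiSupp a = matsuiSupp (a⟦(1 : ℤ)⟧) :=
  Set.ext fun P => not_congr (P.2.1.shift_one_mem_iff a).symm

lemma matsuiSupp_biprod (a b : C) : matsuiSupp (a ⊞ b) = matsuiSupp a ∪ matsuiSupp b :=
  Set.ext fun P => (not_congr (P.2.1.biprod_mem_iff a b)).trans not_and_or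

lemma matsuiSupp_obj₂_subset {T : Triangle C} (hT : T ∈ distTriang C) :
    matsuiSupp T.obj₂ ⊆ matsuiSupp T.obj₁ ∪ matsuiSupp T.obj₃ := fun P hP =>
  not_and_or.1 fun ⟨h₁, h₃⟩ => hP (P.2.1.ext_mem T hT h₁ h₃)

lemma subset_of_biUnion_matsuiSupp_subset {I J : Set C} (hJ : IsThickSubcat J)
    (h : (⋃ a ∈ I, matsuiSupp a) ⊆ ⋃ b ∈ J, matsuiSupp b) : I ⊆ J := fun a haI => by
  by_contra haJ
  obtain ⟨P, hJP, haP⟩ := exists_matsuiSpc_of_notMem hJ haJ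
  obtain ⟨b, hbJ, hbP⟩ := Set.mem_iUnion₂.1 (h (Set.mem_biUnion haI haP))
  exact hbP (hJP hbJ)

lemma inseparable_generateFrom_iff {α : Type*} {g : Set (Set α)} {x y : α} :
    @Inseparable α (TopologicalSpace.generateFrom g) x y ↔ ∀ U ∈ g, (x ∈ U ↔ y ∈ U) := by
  let := TopologicalSpace.generateFrom g
  refine ⟨fun h U hU => inseparable_iff_forall_isOpen.1 h U (.basic U hU), fun h => ?_⟩
  change nhds x = nhds y
  rw [TopologicalSpace.nhds_generateFrom, TopologicalSpace.nhds_generateFrom]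
  congr! 3 with U
  exact and_congr_left (h U)

instance : T0Space (MatsuiSpc C) where
  t0 P Q h := Subtype.ext <| Set.ext fun a => by
    simpa [matsuiSupp] using inseparable_generateFrom_iff.1 h _ ⟨a, rfl⟩

section SupportDatum

variable {Y : Type w} {s : C → Set Y}

lemma supp_subset_of_isZero (hshift : ∀ a : C, s a = s (a⟦(1 : ℤ)⟧))
    (htri : ∀ T ∈ distTriang C, s T.obj₂ ⊆ s T.obj₁ ∪ s T.obj₃) {Z : C} (hZ : IsZero Z)
    (X : C) : s Z ⊆ s X := by
  have hT : Triangle.mk (0 : X ⟶ Z) 0 (𝟙 (X⟦(1 : ℤ)⟧)) ∈ distTriang C :=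
    (Triangle.distinguished_iff_of_isZero₂ _ hZ).2 (inferInstanceAs (IsIso (𝟙 _)))
  simpa [← hshift X] using htri _ hT

lemma supp_eq_of_iso (hshift : ∀ a : C, s a = s (a⟦(1 : ℤ)⟧))
    (htri : ∀ T ∈ distTriang C, s T.obj₂ ⊆ s T.obj₁ ∪ s T.obj₃) {a b : C} (e : a ≅ b) :
    s a = s b := by
  have hle : ∀ {a b : C} (e : a ≅ b), s b ⊆ s a := fun {a b} e => by
    have hT : Triangle.mk e.hom (0 : b ⟶ 0) 0 ∈ distTriang C :=
      (Triangle.distinguished_iff_of_isZero₃ _ (isZero_zero C)).2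
        (inferInstanceAs (IsIso e.hom))
    simpa [Set.union_eq_left.2 (supp_subset_of_isZero hshift htri (isZero_zero C) a)]
      using htri _ hT
  exact (hle e.symm).antisymm (hle e)

lemma supp_shift (hshift : ∀ a : C, s a = s (a⟦(1 : ℤ)⟧))
    (htri : ∀ T ∈ distTriang C, s T.obj₂ ⊆ s T.obj₁ ∪ s T.obj₃) (a : C) (n : ℤ) :
    s (a⟦n⟧) = s a := by
  induction n using Int.induction_on with
  | zero => exact supp_eq_of_iso hshift htri ((shiftFunctorZero C ℤ).app a)
  | succ n ih =>
    calc s (a⟦(n + 1 : ℤ)⟧) = s ((a⟦(n : ℤ)⟧)⟦(1 : ℤ)⟧) :=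
          supp_eq_of_iso hshift htri ((shiftFunctorAdd C (n : ℤ) 1).app a)
      _ = s a := (hshift _).symm.trans ih
  | pred n ih =>
    calc s (a⟦(-(n : ℤ) - 1)⟧) = s ((a⟦(-(n : ℤ) - 1)⟧)⟦(1 : ℤ)⟧) := hshift _
      _ = s (a⟦(-(n : ℤ))⟧) := (supp_eq_of_iso hshift htri
          ((shiftFunctorAdd' C (-(n : ℤ) - 1) 1 (-(n : ℤ)) (by ring)).app a)).symm
      _ = s a := ih

/-- A retract `Z` of `X` is a direct summand, via the cone of the split mono `Z ⟶ X`. -/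
lemma supp_subset_of_retract (hshift : ∀ a : C, s a = s (a⟦(1 : ℤ)⟧))
    (hsum : ∀ a b : C, s (a ⊞ b) = s a ∪ s b)
    (htri : ∀ T ∈ distTriang C, s T.obj₂ ⊆ s T.obj₁ ∪ s T.obj₃)
    {X Z : C} (i : Z ⟶ X) (r : X ⟶ Z) (hir : i ≫ r = 𝟙 Z) : s Z ⊆ s X := by
  obtain ⟨W, g, h, hT⟩ := distinguished_cocone_triangle i
  have : IsSplitMono i := .mk' ⟨r, hir⟩
  obtain ⟨e, -⟩ := exists_iso_binaryBiproduct_of_distTriang _ hT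
    (Triangle.mor₃_eq_zero_of_mono₁ _ hT (inferInstanceAs (Mono i)))
  calc s Z ⊆ s (Z ⊞ W) := hsum Z W ▸ Set.subset_union_left
    _ = s X := (supp_eq_of_iso hshift htri e).symm

lemma isThickSubcat_setOf_notMem_supp (hshift : ∀ a : C, s a = s (a⟦(1 : ℤ)⟧))
    (hsum : ∀ a b : C, s (a ⊞ b) = s a ∪ s b)
    (htri : ∀ T ∈ distTriang C, s T.obj₂ ⊆ s T.obj₁ ∪ s T.obj₃)
    {y : Y} (hy : y ∉ s (0 : C)) : IsThickSubcat {c : C | y ∉ s c} where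
  zero_mem X hX hyX := hy (supp_subset_of_isZero hshift htri hX 0 hyX)
  iso_mem e hX := by rwa [Set.mem_ofPred_eq, ← supp_eq_of_iso hshift htri e]
  shift_mem X n hX := by rwa [Set.mem_ofPred_eq, supp_shift hshift htri]
  ext_mem T hT h₁ h₃ hy₂ := (htri T hT hy₂).elim h₁ h₃
  retract_mem X Z hX i r hir hyZ := hX (supp_subset_of_retract hshift hsum htri i r hir hyZ)

lemma exists_forall_mem_supp_iff_notMem (hshift : ∀ a : C, s a = s (a⟦(1 : ℤ)⟧))
    (hsum : ∀ a b : C, s (a ⊞ b) = s a ∪ s b)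
    (htri : ∀ T ∈ distTriang C, s T.obj₂ ⊆ s T.obj₁ ∪ s T.obj₃)
    (hsep : ∀ I J : Set C, IsThickSubcat I → IsThickSubcat J → I ≠ J →
      (⋃ a ∈ I, s a) ≠ ⋃ b ∈ J, s b)
    (P : MatsuiSpc C) : ∃ y : Y, ∀ a : C, y ∈ s a ↔ a ∉ P.1 := by
  obtain ⟨P, hP, hPJ⟩ := P
  set J := ⋂₀ {Q : Set C | IsThickSubcat Q ∧ P ⊂ Q}
  have hJ : IsThickSubcat J := IsThickSubcat.sInter fun Q hQ => hQ.1
  obtain ⟨y, hyJ, hyP⟩ := Set.exists_of_ssubset <|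
    (Set.biUnion_subset_biUnion_left hPJ.subset).ssubset_of_ne (hsep P J hP hJ hPJ.ne)
  obtain ⟨b, hbJ, hyb⟩ := Set.mem_iUnion₂.1 hyJ
  have hPy : P ⊆ {c : C | y ∉ s c} := fun a ha hya => hyP (Set.mem_biUnion ha hya)
  have hy0 : y ∉ s (0 : C) := hPy (hP.zero_mem _ (isZero_zero C))
  have hPeq : P = {c : C | y ∉ s c} := by
    by_contra hne
    have hJy : J ⊆ {c : C | y ∉ s c} := Set.sInter_subset_of_mem
      ⟨isThickSubcat_setOf_notMem_supp hshift hsum htri hy0, hPy.ssubset_of_ne hne⟩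
    exact hJy hbJ hyb
  exact ⟨y, fun a => iff_not_comm.1 (Set.ext_iff.1 hPeq a)⟩

end SupportDatum

/-- The Matsui spectrum `Spc_△(T)`, with `a ↦ Supp(a)` and the topology generated by
the `Supp(a)` as closed sets, is a support datum of `T`, and it is universal: for every
support datum `(Y, Supp_Y)` of `T` there is a unique continuous `f : Spc_△(T) → Y`
with `f ⁻¹(Supp_Y a) = Supp a` for every object `a`. -/
theorem stmt_13 (C : Type u) [Category.{v} C] [Preadditive C] [HasZeroObject C]
    [HasShift C ℤ] [∀ n : ℤ, (shiftFunctor C n).Additive] [Pretriangulated C]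
    [HasBinaryBiproducts C] :
    (T0Space (MatsuiSpc C) ∧
      (∀ a : C, matsuiSupp a = matsuiSupp (a⟦(1 : ℤ)⟧)) ∧
      (∀ a b : C, matsuiSupp (a ⊞ b) = matsuiSupp a ∪ matsuiSupp b) ∧
      (∀ T ∈ distTriang C,
        matsuiSupp T.obj₂ ⊆ matsuiSupp T.obj₁ ∪ matsuiSupp T.obj₃) ∧
      (∀ I J : Set C, IsThickSubcat I → IsThickSubcat J → I ≠ J →
        (⋃ a ∈ I, matsuiSupp a) ≠ ⋃ b ∈ J, matsuiSupp b) ∧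
      MatsuiSpc.topologicalSpace =
        TopologicalSpace.generateFrom
          {U : Set (MatsuiSpc C) | ∃ a : C, U = (matsuiSupp a)ᶜ}) ∧
    ∀ (Y : Type w) (tY : TopologicalSpace Y), @T0Space Y tY →
      ∀ sY : C → Set Y,
        (∀ a : C, sY a = sY (a⟦(1 : ℤ)⟧)) →
        (∀ a b : C, sY (a ⊞ b) = sY a ∪ sY b) →
        (∀ T ∈ distTriang C, sY T.obj₂ ⊆ sY T.obj₁ ∪ sY T.obj₃) →
        (∀ I J : Set C, IsThickSubcat I → IsThickSubcat J → I ≠ J →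
          (⋃ a ∈ I, sY a) ≠ ⋃ b ∈ J, sY b) →
        tY = TopologicalSpace.generateFrom {U : Set Y | ∃ a : C, U = (sY a)ᶜ} →
        ∃! f : MatsuiSpc C → Y,
          @Continuous (MatsuiSpc C) Y MatsuiSpc.topologicalSpace tY f ∧
          ∀ a : C, f ⁻¹' sY a = matsuiSupp a := by
  refine ⟨⟨inferInstance, matsuiSupp_shift_one, matsuiSupp_biprod,
    fun T hT => matsuiSupp_obj₂_subset hT, fun I J hI hJ hne heq =>
      hne ((subset_of_biUnion_matsuiSupp_subset hJ heq.subset).antisymm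
        (subset_of_biUnion_matsuiSupp_subset hI heq.symm.subset)), rfl⟩, ?_⟩
  rintro Y tY hY sY hshift hsum htri hsep rfl
  choose f hf using exists_forall_mem_supp_iff_notMem hshift hsum htri hsep
  have hpre : ∀ a, f ⁻¹' sY a = matsuiSupp a := fun a => Set.ext fun P => hf P a
  refine ⟨f, ⟨continuous_generateFrom_iff.2 ?_, hpre⟩, fun g ⟨_, hg⟩ => funext fun P => ?_⟩
  · rintro _ ⟨a, rfl⟩
    rw [Set.preimage_compl, hpre]
    exact .basic _ ⟨a, rfl⟩
  · refine @Inseparable.eq _ (.generateFrom _) hY _ _ (inseparable_generateFrom_iff.2 ?_)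
    rintro _ ⟨a, rfl⟩
    rw [← Set.mem_preimage, ← Set.mem_preimage, Set.preimage_compl, Set.preimage_compl, hg, hpre]
end

section
/- Let T be a pretriangulated category and let L_T be the join-semilattice of classically finitely generated thick subcategories of T. Fix a T0 topological space Y. Then the assignment sending a support datum structure Supp on Y for T to the map I ↦ ∪_{a∈I} Supp(a) on L_T, and the assignment sending a support datum structure Supp' on Y for L_T to the map a ↦ Supp'(⟨a⟩) (where ⟨a⟩ is the thick subcategory generated by a), are mutually inverse bijections between support datum structures of T on Y and support datum structures of L_T on Y. -/
open CategoryTheory CategoryTheory.Limits CategoryTheory.Pretriangulated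

universe w v u

variable {C : Type u} [Category.{v} C] [Preadditive C] [HasZeroObject C]
  [HasShift C ℤ] [∀ n : ℤ, (shiftFunctor C n).Additive] [Pretriangulated C]

/-- The smallest thick subcategory containing a class of objects `W`. -/
def thickClosure (W : Set C) : Set C := ⋂₀ {P : Set C | IsThickSubcat P ∧ W ⊆ P}

lemma thickClosure_isThick (W : Set C) : IsThickSubcat (thickClosure W) where
  zero_mem X hX := Set.mem_sInter.2 fun _ hP => hP.1.zero_mem X hX
  iso_mem e hX := Set.mem_sInter.2 fun P hP => hP.1.iso_mem e (Set.mem_sInter.1 hX P hP)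
  shift_mem X n hX :=
    Set.mem_sInter.2 fun P hP => hP.1.shift_mem X n (Set.mem_sInter.1 hX P hP)
  ext_mem T hT h1 h3 := Set.mem_sInter.2 fun P hP =>
    hP.1.ext_mem T hT (Set.mem_sInter.1 h1 P hP) (Set.mem_sInter.1 h3 P hP)
  retract_mem X Y hX i r hir := Set.mem_sInter.2 fun P hP =>
    hP.1.retract_mem X Y (Set.mem_sInter.1 hX P hP) i r hir

/-- A classically finitely generated thick subcategory: one which is the smallest thick
subcategory containing some single object. -/
def IsFGThick (I : Set C) : Prop := IsThickSubcat I ∧ ∃ a : C, I = thickClosure {a}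

/-- The join-semilattice `L_T` of classically finitely generated thick subcategories. -/
abbrev FGThick (C : Type u) [Category.{v} C] [Preadditive C] [HasZeroObject C]
    [HasShift C ℤ] [∀ n : ℤ, (shiftFunctor C n).Additive] [Pretriangulated C] :=
  {I : Set C // IsFGThick I}

/-- An ind-object of `L_T`: a nonempty downward closed subset closed under joins
(the join of `I` and `J` being the thick subcategory generated by `I ∪ J`). -/
def IndObjFG (𝒮 : Set (FGThick C)) : Prop :=
  𝒮.Nonempty ∧ (∀ I J : FGThick C, I.1 ⊆ J.1 → J ∈ 𝒮 → I ∈ 𝒮) ∧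
  (∀ I J K : FGThick C, I ∈ 𝒮 → J ∈ 𝒮 → K.1 = thickClosure (I.1 ∪ J.1) → K ∈ 𝒮)

variable (C) in
/-- A support datum structure of `T` on a fixed T0 space `Y`. -/
def IsSuppDatumT {Y : Type w} [HasBinaryBiproducts C] (tY : TopologicalSpace Y)
    (s : C → Set Y) : Prop :=
  (∀ a : C, s a = s (a⟦(1 : ℤ)⟧)) ∧
  (∀ a b : C, s (a ⊞ b) = s a ∪ s b) ∧
  (∀ T ∈ distTriang C, s T.obj₂ ⊆ s T.obj₁ ∪ s T.obj₃) ∧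
  (∀ I J : Set C, IsThickSubcat I → IsThickSubcat J → I ≠ J →
    (⋃ a ∈ I, s a) ≠ ⋃ a ∈ J, s a) ∧
  tY = TopologicalSpace.generateFrom {U : Set Y | ∃ a : C, U = (s a)ᶜ}

variable (C) in
/-- A support datum structure of the join-semilattice `L_T` on a fixed T0 space `Y`. -/
def IsSuppDatumL {Y : Type w} (tY : TopologicalSpace Y)
    (s' : FGThick C → Set Y) : Prop :=
  (∀ I J K : FGThick C, K.1 = thickClosure (I.1 ∪ J.1) → s' K = s' I ∪ s' J) ∧
  (∀ 𝒮 𝒯 : Set (FGThick C), IndObjFG 𝒮 → IndObjFG 𝒯 →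
    (⋃ I ∈ 𝒮, s' I) = (⋃ I ∈ 𝒯, s' I) → 𝒮 = 𝒯) ∧
  tY = TopologicalSpace.generateFrom {U : Set Y | ∃ I : FGThick C, U = (s' I)ᶜ}

/-- The map from support datum structures of `T` to support datum structures of `L_T`:
`Supp ↦ (I ↦ ⋃_{a ∈ I} Supp a)`. -/
def toSuppL {Y : Type w} (s : C → Set Y) : FGThick C → Set Y :=
  fun I => ⋃ a ∈ I.1, s a

/-- The map in the other direction: `Supp' ↦ (a ↦ Supp' ⟨a⟩)`. -/
def toSuppT {Y : Type w} (s' : FGThick C → Set Y) : C → Set Y :=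
  fun a => s' ⟨thickClosure {a}, thickClosure_isThick _, a, rfl⟩

/-! For a support datum `Supp` of `T` and any set `U`, the objects whose support lies in `U` form a
thick subcategory; hence the supports of the objects of `⟨W⟩` are covered by those of `W`, which
makes `I ↦ ⋃_{a ∈ I} Supp a` additive on joins and sends `⟨a⟩` back to `Supp a`. Conversely,
additivity on joins makes `Supp'` monotone, so `⋃_{a ∈ I} Supp' ⟨a⟩ = Supp' I`. The two injectivity
axioms correspond to each other because thick subcategories and ind-objects of `L_T` correspond via
`I ↦ {K | K ⊆ I}` and `𝒮 ↦ ⋃ 𝒮`, and the two topologies agree because both maps preserve the set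
of supports. -/

open ZeroObject

lemma subset_thickClosure (W : Set C) : W ⊆ thickClosure W :=
  fun _ ha => Set.mem_sInter.2 fun _ hP => hP.2 ha

lemma mem_thickClosure_singleton (a : C) : a ∈ thickClosure {a} :=
  subset_thickClosure _ rfl

namespace IsThickSubcat

variable {P : Set C} (hP : IsThickSubcat P)
include hP

lemma thickClosure_subset {W : Set C} (h : W ⊆ P) : thickClosure W ⊆ P :=
  fun _ ha => Set.mem_sInter.1 ha P ⟨hP, h⟩

lemma thickClosure_singleton_subset_iff {a : C} : thickClosure {a} ⊆ P ↔ a ∈ P :=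
  ⟨fun h => h (mem_thickClosure_singleton a),
    fun ha => hP.thickClosure_subset (Set.singleton_subset_iff.2 ha)⟩

lemma shift_mem_iff (X : C) (n : ℤ) : X⟦n⟧ ∈ P ↔ X ∈ P :=
  ⟨fun h => hP.iso_mem ((shiftFunctorCompIsoId C n (-n) (add_neg_cancel n)).app X)
    (hP.shift_mem _ (-n) h), hP.shift_mem X n⟩

lemma biprod_mem_iff_s15 [HasBinaryBiproducts C] (X Y : C) : (X ⊞ Y : C) ∈ P ↔ X ∈ P ∧ Y ∈ P :=
  ⟨fun h => ⟨hP.retract_mem _ X h biprod.inl biprod.fst biprod.inl_fst,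
      hP.retract_mem _ Y h biprod.inr biprod.snd biprod.inr_snd⟩,
    fun h => hP.ext_mem _ (binaryBiproductTriangle_distinguished X Y) h.1 h.2⟩

end IsThickSubcat

lemma thickClosure_singleton_shift (a : C) (n : ℤ) :
    thickClosure {a⟦n⟧} = thickClosure {a} := by
  have hn := (thickClosure_isThick {a⟦n⟧}).shift_mem_iff a n
  have ha := (thickClosure_isThick {a}).shift_mem_iff a n
  apply subset_antisymm
  · rw [(thickClosure_isThick _).thickClosure_singleton_subset_iff, ha]
    exact mem_thickClosure_singleton a
  · rw [(thickClosure_isThick _).thickClosure_singleton_subset_iff, ← hn]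
    exact mem_thickClosure_singleton _

lemma thickClosure_singleton_biprod [HasBinaryBiproducts C] (x y : C) :
    thickClosure {x ⊞ y} = thickClosure (thickClosure {x} ∪ thickClosure {y}) := by
  have hxy := (thickClosure_isThick {x ⊞ y}).biprod_mem_iff_s15 x y
  apply subset_antisymm
  · rw [(thickClosure_isThick _).thickClosure_singleton_subset_iff,
      (thickClosure_isThick _).biprod_mem_iff_s15]
    exact ⟨subset_thickClosure _ (Or.inl (mem_thickClosure_singleton x)),
      subset_thickClosure _ (Or.inr (mem_thickClosure_singleton y))⟩
  · refine (thickClosure_isThick _).thickClosure_subset (Set.union_subset ?_ ?_) <;>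
      rw [(thickClosure_isThick _).thickClosure_singleton_subset_iff]
    · exact (hxy.1 (mem_thickClosure_singleton _)).1
    · exact (hxy.1 (mem_thickClosure_singleton _)).2

def FGThick.of (a : C) : FGThick C := ⟨thickClosure {a}, thickClosure_isThick _, a, rfl⟩

lemma FGThick.exists_eq_of (I : FGThick C) : ∃ a : C, I = FGThick.of a := by
  obtain ⟨a, ha⟩ := I.2.2
  exact ⟨a, Subtype.ext ha⟩

lemma range_toSuppT {Y : Type w} (s' : FGThick C → Set Y) :
    Set.range (toSuppT s') = Set.range s' := by
  refine subset_antisymm (Set.range_comp_subset_range _ s') ?_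
  rintro _ ⟨I, rfl⟩
  obtain ⟨a, rfl⟩ := I.exists_eq_of
  exact ⟨a, rfl⟩

lemma FGThick.exists_join [HasBinaryBiproducts C] (I J : FGThick C) :
    ∃ K : FGThick C, K.1 = thickClosure (I.1 ∪ J.1) := by
  obtain ⟨x, rfl⟩ := I.exists_eq_of
  obtain ⟨y, rfl⟩ := J.exists_eq_of
  exact ⟨FGThick.of (x ⊞ y), thickClosure_singleton_biprod x y⟩

section SupportOfObjects

variable {Y : Type w} {s : C → Set Y}
  (hshift : ∀ a : C, s a = s (a⟦(1 : ℤ)⟧))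
  (hbiprod : ∀ a b : C, s (a ⊞ b) = s a ∪ s b)
  (htri : ∀ T ∈ distTriang C, s T.obj₂ ⊆ s T.obj₁ ∪ s T.obj₃)

include hshift htri

lemma supp_subset_of_isZero_s15 {X : C} (hX : IsZero X) (a : C) : s X ⊆ s a := by
  have hd : Triangle.mk (𝟙 a) (0 : a ⟶ X) (0 : X ⟶ a⟦(1 : ℤ)⟧) ∈ distTriang C :=
    isomorphic_distinguished _ (contractible_distinguished a) _ <|
      Triangle.isoMk _ _ (Iso.refl _) (Iso.refl _) hX.isoZero (by cat_disch)
        (zero_comp.trans comp_zero.symm) (zero_comp.trans comp_zero.symm)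
  have h := htri _ (rot_of_distTriang _ hd)
  change s X ⊆ s a ∪ s (a⟦(1 : ℤ)⟧) at h
  rwa [← hshift a, Set.union_self] at h

lemma supp_eq_of_iso_s15 {a b : C} (e : a ≅ b) : s a = s b := by
  have key : ∀ {x y : C} (f : x ⟶ y), IsIso f → s y ⊆ s x := by
    intro x y f hf
    obtain ⟨Z, g, h, hd⟩ := distinguished_cocone_triangle f
    have hZ : IsZero Z := Triangle.isZero₃_of_isIso₁ _ hd hf
    exact (htri _ hd).trans
      (Set.union_subset subset_rfl (supp_subset_of_isZero_s15 hshift htri hZ x))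
  exact subset_antisymm (key e.inv inferInstance) (key e.hom inferInstance)

lemma supp_shift_s15 (a : C) (n : ℤ) : s (a⟦n⟧) = s a := by
  induction n using Int.induction_on with
  | zero => exact supp_eq_of_iso_s15 hshift htri ((shiftFunctorZero C ℤ).app a)
  | succ n ih =>
    have e : a⟦(n : ℤ) + 1⟧ ≅ (a⟦(n : ℤ)⟧)⟦(1 : ℤ)⟧ :=
      (shiftFunctorAdd' C (n : ℤ) 1 ((n : ℤ) + 1) rfl).app a
    rw [supp_eq_of_iso_s15 hshift htri e, ← hshift, ih]
  | pred n ih =>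
    have e : a⟦-(n : ℤ)⟧ ≅ (a⟦-(n : ℤ) - 1⟧)⟦(1 : ℤ)⟧ :=
      (shiftFunctorAdd' C (-(n : ℤ) - 1) 1 (-(n : ℤ)) (by ring)).app a
    rw [hshift (a⟦-(n : ℤ) - 1⟧), ← supp_eq_of_iso_s15 hshift htri e, ih]

include hbiprod

/-- A retract is a direct summand, its complement being the cone of the split mono. -/
lemma supp_subset_of_retract_s15 {X Z : C} (i : Z ⟶ X) (r : X ⟶ Z) (hir : i ≫ r = 𝟙 Z) :
    s Z ⊆ s X := by
  obtain ⟨W, p, w, hd⟩ := distinguished_cocone_triangle i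
  have : Mono (i⟦(1 : ℤ)⟧') :=
    SplitMono.mono ⟨r⟦(1 : ℤ)⟧', by
      rw [← Functor.map_comp, hir]
      exact (shiftFunctor C (1 : ℤ)).map_id Z⟩
  have hw : w = 0 := by
    rw [← cancel_mono (i⟦(1 : ℤ)⟧'), zero_comp]
    exact comp_distTriang_mor_zero₃₁ _ hd
  obtain ⟨e, -, -⟩ := exists_iso_binaryBiproduct_of_distTriang _ hd hw
  change X ≅ Z ⊞ W at e
  rw [supp_eq_of_iso_s15 hshift htri e, hbiprod]
  exact Set.subset_union_left

lemma isThickSubcat_setOf_supp_subset {U : Set Y} (hU : ∃ b : C, s b ⊆ U) :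
    IsThickSubcat {a : C | s a ⊆ U} where
  zero_mem _ hX := (supp_subset_of_isZero_s15 hshift htri hX hU.choose).trans hU.choose_spec
  iso_mem e hX := (supp_eq_of_iso_s15 hshift htri e).symm.subset.trans hX
  shift_mem X n hX := (supp_shift_s15 hshift htri X n).subset.trans hX
  ext_mem T hT h₁ h₃ := (htri T hT).trans (Set.union_subset h₁ h₃)
  retract_mem _ _ hX i r hir := (supp_subset_of_retract_s15 hshift hbiprod htri i r hir).trans hX

lemma biUnion_supp_thickClosure {W : Set C} (hW : W.Nonempty) :
    ⋃ a ∈ thickClosure W, s a = ⋃ a ∈ W, s a := by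
  refine subset_antisymm (Set.iUnion₂_subset fun a ha => ?_)
    (Set.biUnion_subset_biUnion_left (subset_thickClosure W))
  have hthick := isThickSubcat_setOf_supp_subset hshift hbiprod htri
    (U := ⋃ a ∈ W, s a) ⟨hW.some, Set.subset_biUnion_of_mem hW.some_mem⟩
  exact hthick.thickClosure_subset (fun b hb => Set.subset_biUnion_of_mem hb) ha

lemma toSuppL_of (a : C) : toSuppL s (FGThick.of a) = s a :=
  (biUnion_supp_thickClosure hshift hbiprod htri (Set.singleton_nonempty a)).trans
    (Set.biUnion_singleton a s)

lemma toSuppT_toSuppL : toSuppT (toSuppL s) = s :=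
  funext (toSuppL_of hshift hbiprod htri)

lemma range_toSuppL : Set.range (toSuppL s) = Set.range s := by
  conv_rhs => rw [← toSuppT_toSuppL hshift hbiprod htri]
  exact (range_toSuppT _).symm

end SupportOfObjects

namespace IndObjFG

variable {𝒮 : Set (FGThick C)} (h𝒮 : IndObjFG 𝒮)
include h𝒮

lemma isThickSubcat_biUnion [HasBinaryBiproducts C] : IsThickSubcat (⋃ I ∈ 𝒮, I.1) where
  zero_mem X hX := by
    obtain ⟨I, hI⟩ := h𝒮.1
    exact Set.mem_iUnion₂.2 ⟨I, hI, I.2.1.zero_mem X hX⟩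
  iso_mem e hX := by
    obtain ⟨I, hI, hx⟩ := Set.mem_iUnion₂.1 hX
    exact Set.mem_iUnion₂.2 ⟨I, hI, I.2.1.iso_mem e hx⟩
  shift_mem X n hX := by
    obtain ⟨I, hI, hx⟩ := Set.mem_iUnion₂.1 hX
    exact Set.mem_iUnion₂.2 ⟨I, hI, I.2.1.shift_mem X n hx⟩
  ext_mem T hT h₁ h₃ := by
    obtain ⟨I, hI, hx⟩ := Set.mem_iUnion₂.1 h₁
    obtain ⟨J, hJ, hz⟩ := Set.mem_iUnion₂.1 h₃
    obtain ⟨K, hK⟩ := FGThick.exists_join I J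
    refine Set.mem_iUnion₂.2 ⟨K, h𝒮.2.2 I J K hI hJ hK, ?_⟩
    rw [hK]
    exact (thickClosure_isThick _).ext_mem T hT
      (subset_thickClosure _ (Or.inl hx)) (subset_thickClosure _ (Or.inr hz))
  retract_mem X Z hX i r hir := by
    obtain ⟨I, hI, hx⟩ := Set.mem_iUnion₂.1 hX
    exact Set.mem_iUnion₂.2 ⟨I, hI, I.2.1.retract_mem X Z hx i r hir⟩

lemma mem_iff_subset_biUnion (I : FGThick C) : I ∈ 𝒮 ↔ I.1 ⊆ ⋃ J ∈ 𝒮, J.1 := by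
  refine ⟨fun hI => Set.subset_biUnion_of_mem (u := Subtype.val) hI, fun h => ?_⟩
  obtain ⟨x, rfl⟩ := I.exists_eq_of
  obtain ⟨J, hJ, hxJ⟩ := Set.mem_iUnion₂.1 (h (mem_thickClosure_singleton x))
  exact h𝒮.2.1 _ J (J.2.1.thickClosure_singleton_subset_iff.2 hxJ) hJ

lemma eq_of_biUnion_eq {𝒯 : Set (FGThick C)} (h𝒯 : IndObjFG 𝒯)
    (h : ⋃ I ∈ 𝒮, I.1 = ⋃ I ∈ 𝒯, I.1) : 𝒮 = 𝒯 := by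
  ext I
  rw [h𝒮.mem_iff_subset_biUnion, h𝒯.mem_iff_subset_biUnion, h]

end IndObjFG

namespace IsThickSubcat

variable {I : Set C} (hI : IsThickSubcat I)
include hI

lemma indObjFG_setOf_subset : IndObjFG {K : FGThick C | K.1 ⊆ I} := by
  refine ⟨⟨FGThick.of 0, hI.thickClosure_singleton_subset_iff.2 (hI.zero_mem 0 (isZero_zero C))⟩,
    fun K K' h hK' => h.trans hK', fun K K' K'' hK hK' h => ?_⟩
  change K''.1 ⊆ I
  rw [h]
  exact hI.thickClosure_subset (Set.union_subset hK hK')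

lemma eq_of_setOf_subset_eq {J : Set C} (hJ : IsThickSubcat J)
    (h : {K : FGThick C | K.1 ⊆ I} = {K | K.1 ⊆ J}) : I = J := by
  ext a
  rw [← hI.thickClosure_singleton_subset_iff, ← hJ.thickClosure_singleton_subset_iff]
  exact Set.ext_iff.1 h (FGThick.of a)

lemma biUnion_toSuppT {Y : Type w} (s' : FGThick C → Set Y) :
    ⋃ a ∈ I, toSuppT s' a = ⋃ K ∈ {K : FGThick C | K.1 ⊆ I}, s' K := by
  apply subset_antisymm
  · exact Set.iUnion₂_subset fun a ha =>
      Set.subset_biUnion_of_mem (u := s') (hI.thickClosure_singleton_subset_iff.2 ha)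
  · refine Set.iUnion₂_subset fun K hK => ?_
    obtain ⟨a, rfl⟩ := K.exists_eq_of
    exact Set.subset_biUnion_of_mem (u := toSuppT s') (hI.thickClosure_singleton_subset_iff.1 hK)

end IsThickSubcat

section SupportOfLattice

variable {Y : Type w} {s' : FGThick C → Set Y}
  (hjoin : ∀ I J K : FGThick C, K.1 = thickClosure (I.1 ∪ J.1) → s' K = s' I ∪ s' J)
include hjoin

lemma monotone_of_join : Monotone s' := by
  intro I J h
  have hJ : J.1 = thickClosure (I.1 ∪ J.1) :=
    subset_antisymm (Set.subset_union_right.trans (subset_thickClosure _))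
      (J.2.1.thickClosure_subset (Set.union_subset h subset_rfl))
  rw [hjoin I J J hJ]
  exact Set.subset_union_left

lemma toSuppL_toSuppT : toSuppL (toSuppT s') = s' := by
  funext I
  obtain ⟨x, rfl⟩ := I.exists_eq_of
  refine subset_antisymm (Set.iUnion₂_subset fun a ha => monotone_of_join hjoin ?_)
    (Set.subset_biUnion_of_mem (u := toSuppT s') (mem_thickClosure_singleton x))
  exact (thickClosure_isThick _).thickClosure_singleton_subset_iff.2 ha

end SupportOfLattice

lemma biUnion_toSuppL {Y : Type w} (s : C → Set Y) (𝒮 : Set (FGThick C)) :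
    ⋃ I ∈ 𝒮, toSuppL s I = ⋃ a ∈ ⋃ I ∈ 𝒮, I.1, s a := by
  simp only [toSuppL, Set.biUnion_iUnion]

lemma setOf_exists_eq_compl_congr {α β Y : Type*} {f : α → Set Y} {g : β → Set Y}
    (h : Set.range f = Set.range g) :
    {U : Set Y | ∃ a, U = (f a)ᶜ} = {U | ∃ b, U = (g b)ᶜ} := by
  ext U
  constructor
  · rintro ⟨a, rfl⟩
    obtain ⟨b, hb⟩ : f a ∈ Set.range g := h ▸ ⟨a, rfl⟩
    exact ⟨b, hb ▸ rfl⟩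
  · rintro ⟨b, rfl⟩
    obtain ⟨a, ha⟩ : g b ∈ Set.range f := h ▸ ⟨b, rfl⟩
    exact ⟨a, ha ▸ rfl⟩

variable [HasBinaryBiproducts C] {Y : Type w} {tY : TopologicalSpace Y}

lemma isSuppDatumL_toSuppL {s : C → Set Y} (hs : IsSuppDatumT C tY s) :
    IsSuppDatumL C tY (toSuppL s) := by
  obtain ⟨hshift, hbiprod, htri, hinj, htop⟩ := hs
  refine ⟨fun I J K hK => ?_, fun 𝒮 𝒯 h𝒮 h𝒯 heq => ?_, ?_⟩
  · obtain ⟨x, rfl⟩ := I.exists_eq_of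
    rw [toSuppL, hK, biUnion_supp_thickClosure hshift hbiprod htri
      ⟨x, Or.inl (mem_thickClosure_singleton x)⟩, Set.biUnion_union]
    rfl
  · refine h𝒮.eq_of_biUnion_eq h𝒯 (not_not.1 fun hne => hinj _ _
      h𝒮.isThickSubcat_biUnion h𝒯.isThickSubcat_biUnion hne ?_)
    rwa [← biUnion_toSuppL, ← biUnion_toSuppL]
  · rw [htop]
    congr 1
    exact setOf_exists_eq_compl_congr (range_toSuppL hshift hbiprod htri).symm

lemma isSuppDatumT_toSuppT {s' : FGThick C → Set Y} (hs' : IsSuppDatumL C tY s') :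
    IsSuppDatumT C tY (toSuppT s') := by
  obtain ⟨hjoin, hinj, htop⟩ := hs'
  refine ⟨fun a => ?_, fun a b => ?_, fun T hT => ?_, fun I J hI hJ hne heq => ?_, ?_⟩
  · exact congrArg s' (Subtype.ext (thickClosure_singleton_shift a 1).symm)
  · exact hjoin (FGThick.of a) (FGThick.of b) (FGThick.of (a ⊞ b))
      (thickClosure_singleton_biprod a b)
  · have hsum := (thickClosure_isThick {T.obj₁ ⊞ T.obj₃}).biprod_mem_iff_s15 T.obj₁ T.obj₃
    have h₂ : T.obj₂ ∈ thickClosure {T.obj₁ ⊞ T.obj₃} :=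
      (thickClosure_isThick _).ext_mem T hT (hsum.1 (mem_thickClosure_singleton _)).1
        (hsum.1 (mem_thickClosure_singleton _)).2
    calc toSuppT s' T.obj₂ ⊆ s' (FGThick.of (T.obj₁ ⊞ T.obj₃)) :=
          monotone_of_join hjoin ((thickClosure_isThick _).thickClosure_singleton_subset_iff.2 h₂)
      _ = _ := hjoin (.of _) (.of _) _ (thickClosure_singleton_biprod _ _)
  · refine hne (hI.eq_of_setOf_subset_eq hJ (hinj _ _ hI.indObjFG_setOf_subset
      hJ.indObjFG_setOf_subset ?_))
    rw [← hI.biUnion_toSuppT, ← hJ.biUnion_toSuppT, heq]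
  · rw [htop]
    congr 1
    exact setOf_exists_eq_compl_congr (range_toSuppT s').symm

/-- For a fixed T0 space `Y`, the assignments `Supp ↦ (I ↦ ⋃_{a ∈ I} Supp a)` and
`Supp' ↦ (a ↦ Supp'(⟨a⟩))` are mutually inverse bijections between support datum
structures of `T` on `Y` and support datum structures of `L_T` on `Y`. -/
theorem stmt_15 (C : Type u) [Category.{v} C] [Preadditive C] [HasZeroObject C]
    [HasShift C ℤ] [∀ n : ℤ, (shiftFunctor C n).Additive] [Pretriangulated C]
    [HasBinaryBiproducts C] (Y : Type w) (tY : TopologicalSpace Y)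
    (hT0 : @T0Space Y tY) :
    (∀ s : C → Set Y, IsSuppDatumT C tY s → IsSuppDatumL C tY (toSuppL s)) ∧
    (∀ s' : FGThick C → Set Y, IsSuppDatumL C tY s' → IsSuppDatumT C tY (toSuppT s')) ∧
    (∀ s : C → Set Y, IsSuppDatumT C tY s → toSuppT (toSuppL s) = s) ∧
    (∀ s' : FGThick C → Set Y, IsSuppDatumL C tY s' → toSuppL (toSuppT s') = s') :=
  ⟨fun _ hs => isSuppDatumL_toSuppL hs, fun _ hs' => isSuppDatumT_toSuppT hs',
    fun _ hs => toSuppT_toSuppL hs.1 hs.2.1 hs.2.2.1, fun _ hs' => toSuppL_toSuppT hs'.1⟩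
end

section
/- Let Y be a noetherian T0 topological space and let Φ be a collection of specialization-closed subsets of Y satisfying: (a) Y ∈ Φ; (b) if Z ⊆ Z' are specialization-closed subsets and Z ∈ Φ, then Z' ∈ Φ; (c) if Z and W are closed subsets both belonging to Φ, then Z ∩ W ∈ Φ; (d) for every family {Z_i} of specialization-closed subsets with ∪_i Z_i ∈ Φ, there exists some i with Z_i ∈ Φ. Then there exists a unique point z₀ ∈ Y such that for every specialization-closed subset Z ⊆ Y: Z ∈ Φ if and only if z₀ ∈ Z. -/
/-!
A minimal closed member `Z₀` of `Φ` exists by noetherianity, and by (c) it lies inside every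
closed member of `Φ`. Writing `Z₀` as the union of the closures of its points, (d) yields
`z₀ ∈ Z₀` with `closure {z₀} ∈ Φ`. A specialization-closed `Z ∈ Φ` is likewise the union of the
closures of its points, so some `closure {z} ⊆ Z` lies in `Φ`; it contains `Z₀ ∋ z₀`. Conversely
`z₀ ∈ Z` gives `closure {z₀} ⊆ Z`, hence `Z ∈ Φ` by (b). Uniqueness is the T0 axiom, since two
such points lie in the same closed sets.
-/

open TopologicalSpace

section

variable {Y : Type*} [TopologicalSpace Y] {Φ : Set (Set Y)}

lemma StableUnderSpecialization.exists_closure_singleton_mem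
    (hd : ∀ 𝒵 : Set (Set Y), (∀ Z ∈ 𝒵, StableUnderSpecialization Z) →
      ⋃₀ 𝒵 ∈ Φ → ∃ Z ∈ 𝒵, Z ∈ Φ)
    {Z : Set Y} (hZ : StableUnderSpecialization Z) (hZΦ : Z ∈ Φ) :
    ∃ z ∈ Z, closure {z} ∈ Φ := by
  rw [← hZ.Union_eq, ← Set.sUnion_image] at hZΦ
  obtain ⟨_, ⟨z, hz, rfl⟩, hzΦ⟩ :=
    hd _ (by rintro _ ⟨y, -, rfl⟩; exact isClosed_closure.stableUnderSpecialization) hZΦ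
  exact ⟨z, hz, hzΦ⟩

lemma Minimal.le_of_mem_of_inter_mem
    (hc : ∀ Z W : Set Y, IsClosed Z → IsClosed W → Z ∈ Φ → W ∈ Φ → Z ∩ W ∈ Φ)
    {Z₀ : Closeds Y} (hZ₀ : Minimal (fun Z : Closeds Y ↦ (Z : Set Y) ∈ Φ) Z₀)
    {W : Closeds Y} (hW : (W : Set Y) ∈ Φ) : Z₀ ≤ W := by
  have hinter : ((Z₀ ⊓ W : Closeds Y) : Set Y) ∈ Φ :=
    hc _ _ Z₀.isClosed W.isClosed hZ₀.prop hW
  exact (hZ₀.le_of_le hinter inf_le_left).trans inf_le_right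

end

theorem stmt_16_general (Y : Type*) [TopologicalSpace Y] [TopologicalSpace.NoetherianSpace Y]
    [T0Space Y] (Φ : Set (Set Y))
    (ha : Set.univ ∈ Φ)
    (hb : ∀ Z Z' : Set Y, StableUnderSpecialization Z' → Z ⊆ Z' → Z ∈ Φ → Z' ∈ Φ)
    (hc : ∀ Z W : Set Y, IsClosed Z → IsClosed W → Z ∈ Φ → W ∈ Φ → Z ∩ W ∈ Φ)
    (hd : ∀ 𝒵 : Set (Set Y), (∀ Z ∈ 𝒵, StableUnderSpecialization Z) →
      ⋃₀ 𝒵 ∈ Φ → ∃ Z ∈ 𝒵, Z ∈ Φ) :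
    ∃! z₀ : Y, ∀ Z : Set Y, StableUnderSpecialization Z → (Z ∈ Φ ↔ z₀ ∈ Z) := by
  obtain ⟨Z₀, hZ₀⟩ :=
    exists_minimal_of_wellFoundedLT (fun Z : Closeds Y ↦ (Z : Set Y) ∈ Φ) ⟨⊤, ha⟩
  obtain ⟨z₀, hz₀, hz₀Φ⟩ :=
    Z₀.isClosed.stableUnderSpecialization.exists_closure_singleton_mem hd hZ₀.prop
  have key : ∀ Z : Set Y, StableUnderSpecialization Z → (Z ∈ Φ ↔ z₀ ∈ Z) := by
    refine fun Z hZ ↦ ⟨fun hZΦ ↦ ?_, fun hz₀Z ↦ ?_⟩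
    · obtain ⟨z, hz, hzΦ⟩ := hZ.exists_closure_singleton_mem hd hZΦ
      have hz₀z : z₀ ∈ closure {z} :=
        hZ₀.le_of_mem_of_inter_mem hc (W := Closeds.closure {z}) hzΦ hz₀
      exact hZ (specializes_iff_mem_closure.2 hz₀z) hz
    · exact hb _ _ hZ (fun x hx ↦ hZ (specializes_iff_mem_closure.2 hx) hz₀Z) hz₀Φ
  refine ⟨z₀, key, fun y hy ↦ Inseparable.eq ?_⟩
  exact inseparable_iff_forall_isClosed.2 fun s hs ↦
    (hy s hs.stableUnderSpecialization).symm.trans (key s hs.stableUnderSpecialization)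

/-- Let `Y` be a noetherian T0 space and `Φ` a collection of specialization-closed
subsets of `Y` such that: (a) `Y ∈ Φ`; (b) `Φ` is upward closed among
specialization-closed subsets; (c) `Φ` is closed under intersections of two closed
members; (d) if a union of a family of specialization-closed sets lies in `Φ`, then
some member of the family lies in `Φ`.  Then there is a unique point `z₀ ∈ Y` with:
for every specialization-closed `Z ⊆ Y`, `Z ∈ Φ ↔ z₀ ∈ Z`. -/
theorem stmt_16 (Y : Type*) [TopologicalSpace Y] [TopologicalSpace.NoetherianSpace Y]
    [T0Space Y] (Φ : Set (Set Y))
    (hΦ : ∀ Z ∈ Φ, StableUnderSpecialization Z)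
    (ha : Set.univ ∈ Φ)
    (hb : ∀ Z Z' : Set Y, StableUnderSpecialization Z' → Z ⊆ Z' → Z ∈ Φ → Z' ∈ Φ)
    (hc : ∀ Z W : Set Y, IsClosed Z → IsClosed W → Z ∈ Φ → W ∈ Φ → Z ∩ W ∈ Φ)
    (hd : ∀ 𝒵 : Set (Set Y), (∀ Z ∈ 𝒵, StableUnderSpecialization Z) →
      ⋃₀ 𝒵 ∈ Φ → ∃ Z ∈ 𝒵, Z ∈ Φ) :
    ∃! z₀ : Y, ∀ Z : Set Y, StableUnderSpecialization Z → (Z ∈ Φ ↔ z₀ ∈ Z) :=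
  stmt_16_general Y Φ ha hb hc hd
end
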